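/- Let A(x) = S(x) = sech(2x) (as a meromorphic function on ℂ) and V₀(x,λ) = −[λ + S′(x)/2]² − sech²(2x). If x is a common zero of V₀(·,λ) and ∂V₀/∂x(·,λ) (a double turning point) with cosh(2x) ≠ 0, then tanh(2x) satisfies tanh(2x) = (1 + iτ√7)/(4iσ) for some choice of signs σ, τ ∈ {+1, −1}, and correspondingly λ = iσ·√(1/2 + (1+iτ√7)/8)·(1 − (1+iτ√7)/4). -/

import Mathlib

open Complex

/-- A double turning point of `V₀(x,λ) = −[λ − tanh(2x)sech(2x)]² − sech²(2x)`
(with `cosh(2x) ≠ 0`) forces `tanh(2x) = (1 + iτ√7)/(4iσ)` and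
`λ = iσ·√(1/2 + (1+iτ√7)/8)·(1 − (1+iτ√7)/4)` for some signs `σ, τ = ±1`. -/
theorem double_turning_point_sech (lam x : ℂ)
    (hx : Complex.cosh (2 * x) ≠ 0)
    (h0 : -(lam - Complex.tanh (2 * x) / Complex.cosh (2 * x)) ^ 2 -
        (1 / Complex.cosh (2 * x)) ^ 2 = 0)
    (h1 : HasDerivAt
      (fun z => -(lam - Complex.tanh (2 * z) / Complex.cosh (2 * z)) ^ 2 -
        (1 / Complex.cosh (2 * z)) ^ 2) 0 x) :
    ∃ σ τ : ℝ, (σ = 1 ∨ σ = -1) ∧ (τ = 1 ∨ τ = -1) ∧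
      Complex.tanh (2 * x) =
        (1 + Complex.I * τ * Real.sqrt 7) / (4 * Complex.I * σ) ∧
      ∃ w : ℂ, w ^ 2 = 1 / 2 + (1 + Complex.I * τ * Real.sqrt 7) / 8 ∧
        lam = Complex.I * σ * w *
          (1 - (1 + Complex.I * τ * Real.sqrt 7) / 4) := by
  have hI : Complex.I ^ 2 = -1 := Complex.I_sq
  have h7 : ((Real.sqrt 7 : ℝ) : ℂ) ^ 2 = 7 := by
    rw [← Complex.ofReal_pow, Real.sq_sqrt (by norm_num : (7:ℝ) ≥ 0)]
    norm_num
  have htaneq : Complex.tanh (2 * x) =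
      Complex.sinh (2 * x) / Complex.cosh (2 * x) :=
    Complex.tanh_eq_sinh_div_cosh _
  simp only [Complex.tanh_eq_sinh_div_cosh] at h0 h1
  set a := Complex.sinh (2 * x) with ha
  set c := Complex.cosh (2 * x) with hc
  have hca : c ^ 2 - a ^ 2 = 1 := by
    rw [ha, hc]; exact Complex.cosh_sq_sub_sinh_sq _
  have h2x : HasDerivAt (fun z : ℂ => 2 * z) 2 x := by
    simpa using (hasDerivAt_id x).const_mul 2
  have hsinh : HasDerivAt (fun z => Complex.sinh (2 * z)) (c * 2) x :=
    (Complex.hasDerivAt_sinh (2 * x)).comp x h2x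
  have hcosh : HasDerivAt (fun z => Complex.cosh (2 * z)) (a * 2) x :=
    (Complex.hasDerivAt_cosh (2 * x)).comp x h2x
  have hq1 := (hsinh.div hcosh hx).div hcosh hx
  have hq2 := (((hasDerivAt_const x lam).sub hq1).pow 2).neg
  have hq3 := ((hasDerivAt_const x (1:ℂ)).div hcosh hx).pow 2
  have hD := (h1.unique (hq2.sub hq3)).symm
  simp only [Pi.div_apply, Pi.sub_apply, ← ha, ← hc] at hD
  rw [← sub_eq_zero] at hD
  clear h1 hq1 hq2 hq3 hsinh hcosh h2x
  clear_value a c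
  rw [htaneq]
  field_simp at hD h0
  norm_num at hD
  rw [mul_inv_cancel₀ hx, div_mul_eq_mul_div, div_add' _ _ _ (pow_ne_zero 2 hx),
    div_eq_zero_iff] at hD
  rcases hD with hD | hD
  swap
  · exact absurd hD (pow_ne_zero 2 hx)
  -- polynomial forms
  have Ph0 : (lam * c ^ 2 - a) ^ 2 + c ^ 2 = 0 := by
    apply mul_left_cancel₀ (pow_ne_zero 2 hx)
    linear_combination -c ^ 2 * h0
  have Pder : (lam * c ^ 2 - a) * (c ^ 2 - 2 * a ^ 2) + a * c ^ 2 = 0 := by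
    apply mul_left_cancel₀ (pow_ne_zero 5 hx)
    linear_combination c ^ 5 * hD / 2
  have Pfac : (lam * c ^ 2 - a - Complex.I * c) * (lam * c ^ 2 - a + Complex.I * c) = 0 := by
    linear_combination Ph0 - c ^ 2 * hI
  set t : ℂ := a / c with htdef
  have ht : a = t * c := (div_mul_cancel₀ a hx).symm
  clear_value t
  have hw2 : (1 / c) ^ 2 = 1 - t ^ 2 := by
    rw [div_pow, one_pow, div_eq_iff (pow_ne_zero 2 hx)]
    linear_combination -hca - (a + t * c) * ht
  rcases mul_eq_zero.mp Pfac with hm | hm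
  · -- lam * c^2 = a + I*c  (epsilon = 1)
    have hq : 2 * t ^ 2 + Complex.I * t - 1 = 0 := by
      apply mul_left_cancel₀ (pow_ne_zero 3 hx)
      linear_combination Complex.I * Pder - Complex.I * (c ^ 2 - 2 * a ^ 2) * hm
        + (2 * a ^ 2 * c - c ^ 3) * hI + (-2 * c * (a + t * c) - Complex.I * c ^ 2) * ht
    have hlam : lam * c = t + Complex.I := by
      apply mul_left_cancel₀ hx; linear_combination hm + ht
    have hfac : (4 * t + Complex.I - (Real.sqrt 7 : ℂ)) *
        (4 * t + Complex.I + (Real.sqrt 7 : ℂ)) = 0 := by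
      linear_combination 8 * hq + hI - h7
    rcases mul_eq_zero.mp hfac with hroot | hroot
    · -- t = (√7 - I)/4 : sigma = 1, tau = 1
      refine ⟨1, 1, Or.inl rfl, Or.inl rfl, ?_, 1 / c, ?_, ?_⟩
      · push_cast
        rw [eq_div_iff (by simp [Complex.I_ne_zero] : (4 : ℂ) * Complex.I * 1 ≠ 0)]
        linear_combination Complex.I * hroot - hI
      · push_cast
        rw [hw2]
        linear_combination (-(4 * t + (Real.sqrt 7:ℂ) - Complex.I) / 16) * hroot
          + (-1/16) * hI + (-1/16) * h7
      · push_cast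
        field_simp
        linear_combination 4 * hlam + hroot + (Real.sqrt 7:ℂ) * hI
    · -- t = (-√7 - I)/4 : sigma = 1, tau = -1
      refine ⟨1, -1, Or.inl rfl, Or.inr rfl, ?_, 1 / c, ?_, ?_⟩
      · push_cast
        rw [eq_div_iff (by simp [Complex.I_ne_zero] : (4 : ℂ) * Complex.I * 1 ≠ 0)]
        linear_combination Complex.I * hroot - hI
      · push_cast
        rw [hw2]
        linear_combination (-(4 * t - (Real.sqrt 7:ℂ) - Complex.I) / 16) * hroot
          + (-1/16) * hI + (-1/16) * h7
      · push_cast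
        field_simp
        linear_combination 4 * hlam + hroot - (Real.sqrt 7:ℂ) * hI
  · -- lam * c^2 = a - I*c  (epsilon = -1)
    have hq : 2 * t ^ 2 - Complex.I * t - 1 = 0 := by
      apply mul_left_cancel₀ (pow_ne_zero 3 hx)
      linear_combination -Complex.I * Pder + Complex.I * (c ^ 2 - 2 * a ^ 2) * hm
        + (2 * a ^ 2 * c - c ^ 3) * hI + (-2 * c * (a + t * c) + Complex.I * c ^ 2) * ht
    have hlam : lam * c = t - Complex.I := by
      apply mul_left_cancel₀ hx; linear_combination hm + ht
    have hfac : (4 * t - Complex.I - (Real.sqrt 7 : ℂ)) *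
        (4 * t - Complex.I + (Real.sqrt 7 : ℂ)) = 0 := by
      linear_combination 8 * hq + hI - h7
    rcases mul_eq_zero.mp hfac with hroot | hroot
    · -- t = (√7 + I)/4 : sigma = -1, tau = -1
      refine ⟨-1, -1, Or.inr rfl, Or.inr rfl, ?_, 1 / c, ?_, ?_⟩
      · push_cast
        rw [eq_div_iff (by simp [Complex.I_ne_zero] : (4 : ℂ) * Complex.I * (-1) ≠ 0)]
        linear_combination -Complex.I * hroot - hI
      · push_cast
        rw [hw2]
        linear_combination (-(4 * t + (Real.sqrt 7:ℂ) + Complex.I) / 16) * hroot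
          + (-1/16) * hI + (-1/16) * h7
      · push_cast
        field_simp
        linear_combination 4 * hlam + hroot + (Real.sqrt 7:ℂ) * hI
    · -- t = (-√7 + I)/4 : sigma = -1, tau = 1
      refine ⟨-1, 1, Or.inr rfl, Or.inl rfl, ?_, 1 / c, ?_, ?_⟩
      · push_cast
        rw [eq_div_iff (by simp [Complex.I_ne_zero] : (4 : ℂ) * Complex.I * (-1) ≠ 0)]
        linear_combination -Complex.I * hroot - hI
      · push_cast
        rw [hw2]
        linear_combination (-(4 * t - (Real.sqrt 7:ℂ) + Complex.I) / 16) * hroot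
          + (-1/16) * hI + (-1/16) * h7
      · push_cast
        field_simp
        linear_combination 4 * hlam + hroot - (Real.sqrt 7:ℂ) * hI
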